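/- For all real numbers t₁, t₂ and all signs ε₂, ε₃ ∈ {1, −1}, the map τ : G → U(1) defined by τ(a,b,c,d) = exp(i(a·t₁ + b·t₂)) · ε₂^c · ε₃^d is a group homomorphism, and it is the unique group homomorphism G → U(1) with τ(g₀) = exp(i·t₁), τ(g₁) = exp(i·t₂), τ(g₂) = ε₂, and τ(g₃) = ε₃. -/

import Mathlib

/-- The underlying set of the group `G` is `ℤ⁴`. -/
def G : Type := ℤ × ℤ × ℤ × ℤ

namespace G

/-- Build an element of `G` from four integers. -/
def mk (a b c d : ℤ) : G := (a, b, c, d)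

/-- The twisted multiplication
`(a,b,c,d)·(a',b',c',d') = (a+a', b+b', c+(−1)^a·c', d+(−1)^a·d')`. -/
def mul' (x y : G) : G :=
  mk (x.1 + y.1) (x.2.1 + y.2.1)
    (x.2.2.1 + (x.1.negOnePow : ℤ) * y.2.2.1)
    (x.2.2.2 + (x.1.negOnePow : ℤ) * y.2.2.2)

/-- The inverse `(a,b,c,d)⁻¹ = (−a, −b, −(−1)^a·c, −(−1)^a·d)`. -/
def inv' (x : G) : G :=
  mk (-x.1) (-x.2.1) (-((x.1.negOnePow : ℤ) * x.2.2.1)) (-((x.1.negOnePow : ℤ) * x.2.2.2))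

instance instGroup : Group G where
  mul := mul'
  one := mk 0 0 0 0
  inv := inv'
  mul_assoc x y z := by
    show mul' (mul' x y) z = mul' x (mul' y z)
    obtain ⟨a, b, c, d⟩ := x
    obtain ⟨a', b', c', d'⟩ := y
    obtain ⟨a'', b'', c'', d''⟩ := z
    simp only [mul', mk, Int.negOnePow_add, Units.val_mul]
    exact Prod.ext (by ring) (Prod.ext (by ring) (Prod.ext (by ring) (by ring)))
  one_mul x := by
    show mul' (mk 0 0 0 0) x = x
    obtain ⟨a, b, c, d⟩ := x
    simp [mul', mk]
    rfl
  mul_one x := by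
    show mul' x (mk 0 0 0 0) = x
    obtain ⟨a, b, c, d⟩ := x
    simp [mul', mk]
    rfl
  inv_mul_cancel x := by
    show mul' (inv' x) x = mk 0 0 0 0
    obtain ⟨a, b, c, d⟩ := x
    simp only [mul', inv', mk, Int.negOnePow_neg]
    exact Prod.ext (by ring) (Prod.ext (by ring) (Prod.ext (by ring) (by ring)))

def g₀ : G := mk 1 0 0 0
def g₁ : G := mk 0 1 0 0
def g₂ : G := mk 0 0 1 0
def g₃ : G := mk 0 0 0 1

end G

/-!
The twist `(−1)^a` only changes the signs of `c` and `d`, which is invisible to elements of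
order two in a commutative group. So `(a,b,c,d) ↦ x^a y^b e₂^c e₃^d` is a homomorphism into any
commutative group as soon as `e₂, e₃` are involutions, and it is the only one with the prescribed
values because `G` is generated by `g₀, g₁, g₂, g₃`.
-/

lemma zpow_units_mul_of_inv_eq_self {M : Type*} [DivisionMonoid M] {e : M} (he : e⁻¹ = e)
    (u : ℤˣ) (c : ℤ) : e ^ ((u : ℤ) * c) = e ^ c := by
  rcases Int.units_eq_one_or u with rfl | rfl <;> simp [← inv_zpow, he]

lemma eq_zpow_of_map_add {M : Type*} [Group M] (f : ℤ → M)
    (hf : ∀ m n, f (m + n) = f m * f n) (n : ℤ) : f n = f 1 ^ n :=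
  MonoidHom.apply_mint _ (MonoidHom.mk' (f ∘ Multiplicative.toAdd) fun _ _ => hf _ _) n

lemma Circle.inv_eq_self_of_coe_eq_one_or_neg_one {z : Circle}
    (hz : (z : ℂ) = 1 ∨ (z : ℂ) = -1) : z⁻¹ = z := by
  ext
  rcases hz with hz | hz <;> simp [hz]

namespace G

lemma mk_mul_mk (a b c d a' b' c' d' : ℤ) :
    mk a b c d * mk a' b' c' d' =
      mk (a + a') (b + b') (c + (a.negOnePow : ℤ) * c') (d + (a.negOnePow : ℤ) * d') :=
  rfl

lemma zpow_g₀ (a : ℤ) : g₀ ^ a = mk a 0 0 0 :=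
  (eq_zpow_of_map_add (fun a => mk a 0 0 0) (fun _ _ => by simp [mk_mul_mk]) a).symm

lemma zpow_g₁ (b : ℤ) : g₁ ^ b = mk 0 b 0 0 :=
  (eq_zpow_of_map_add (fun b => mk 0 b 0 0) (fun _ _ => by simp [mk_mul_mk]) b).symm

lemma zpow_g₂ (c : ℤ) : g₂ ^ c = mk 0 0 c 0 :=
  (eq_zpow_of_map_add (fun c => mk 0 0 c 0) (fun _ _ => by simp [mk_mul_mk]) c).symm

lemma zpow_g₃ (d : ℤ) : g₃ ^ d = mk 0 0 0 d :=
  (eq_zpow_of_map_add (fun d => mk 0 0 0 d) (fun _ _ => by simp [mk_mul_mk]) d).symm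

lemma mk_eq_zpow_mul (a b c d : ℤ) : mk a b c d = g₁ ^ b * g₂ ^ c * g₃ ^ d * g₀ ^ a := by
  simp [zpow_g₀, zpow_g₁, zpow_g₂, zpow_g₃, mk_mul_mk]

lemma closure_generators_eq_top : Subgroup.closure {g₀, g₁, g₂, g₃} = ⊤ := by
  refine eq_top_iff.2 fun x _ => ?_
  obtain ⟨a, b, c, d⟩ := x
  rw [show ((a, b, c, d) : G) = mk a b c d from rfl, mk_eq_zpow_mul]
  have mem {g : G} (hg : g ∈ ({g₀, g₁, g₂, g₃} : Set G)) (n : ℤ) :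
      g ^ n ∈ Subgroup.closure {g₀, g₁, g₂, g₃} :=
    zpow_mem (Subgroup.subset_closure hg) n
  exact mul_mem (mul_mem (mul_mem (mem (by simp) b) (mem (by simp) c)) (mem (by simp) d))
    (mem (by simp) a)

lemma hom_ext {M : Type*} [Monoid M] {f f' : G →* M} (h₀ : f g₀ = f' g₀) (h₁ : f g₁ = f' g₁)
    (h₂ : f g₂ = f' g₂) (h₃ : f g₃ = f' g₃) : f = f' :=
  MonoidHom.eq_of_eqOn_dense closure_generators_eq_top <| by
    rintro g (rfl | rfl | rfl | rfl) <;> assumption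

variable {M : Type*} [CommGroup M] (x y e₂ e₃ : M) (h₂ : e₂⁻¹ = e₂) (h₃ : e₃⁻¹ = e₃)

def lift : G →* M :=
  MonoidHom.mk' (fun g => x ^ g.1 * y ^ g.2.1 * e₂ ^ g.2.2.1 * e₃ ^ g.2.2.2) fun g g' => by
    obtain ⟨a, b, c, d⟩ := g
    obtain ⟨a', b', c', d'⟩ := g'
    change x ^ (a + a') * y ^ (b + b') * e₂ ^ (c + (a.negOnePow : ℤ) * c') *
      e₃ ^ (d + (a.negOnePow : ℤ) * d') = _
    simp only [zpow_add, zpow_units_mul_of_inv_eq_self h₂, zpow_units_mul_of_inv_eq_self h₃]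
    simp only [mul_assoc, mul_left_comm]

@[simp]
lemma lift_mk (a b c d : ℤ) :
    lift x y e₂ e₃ h₂ h₃ (mk a b c d) = x ^ a * y ^ b * e₂ ^ c * e₃ ^ d :=
  rfl

@[simp] lemma lift_g₀ : lift x y e₂ e₃ h₂ h₃ g₀ = x := by simp [g₀]
@[simp] lemma lift_g₁ : lift x y e₂ e₃ h₂ h₃ g₁ = y := by simp [g₁]
@[simp] lemma lift_g₂ : lift x y e₂ e₃ h₂ h₃ g₂ = e₂ := by simp [g₂]
@[simp] lemma lift_g₃ : lift x y e₂ e₃ h₂ h₃ g₃ = e₃ := by simp [g₃]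

end G

open G in
/-- For real `t₁, t₂` and signs `ε₂, ε₃ ∈ {1, −1}`, the map
`(a,b,c,d) ↦ exp(i(a·t₁ + b·t₂))·ε₂^c·ε₃^d` is a group homomorphism `G → U(1)`,
and it is the unique one with `τ(g₀) = exp(i t₁)`, `τ(g₁) = exp(i t₂)`,
`τ(g₂) = ε₂`, `τ(g₃) = ε₃`. -/
theorem G_circle_representations (t₁ t₂ : ℝ) (ε₂ ε₃ : Circle)
    (hε₂ : (ε₂ : ℂ) = 1 ∨ (ε₂ : ℂ) = -1) (hε₃ : (ε₃ : ℂ) = 1 ∨ (ε₃ : ℂ) = -1) :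
    ∃ τ : G →* Circle,
      (∀ a b c d : ℤ,
        τ (mk a b c d) = Circle.exp ((a : ℝ) * t₁ + (b : ℝ) * t₂) * ε₂ ^ c * ε₃ ^ d) ∧
      τ g₀ = Circle.exp t₁ ∧ τ g₁ = Circle.exp t₂ ∧ τ g₂ = ε₂ ∧ τ g₃ = ε₃ ∧
      ∀ τ' : G →* Circle, τ' g₀ = Circle.exp t₁ → τ' g₁ = Circle.exp t₂ →
        τ' g₂ = ε₂ → τ' g₃ = ε₃ → τ' = τ := by
  set τ := lift (Circle.exp t₁) (Circle.exp t₂) ε₂ ε₃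
    (Circle.inv_eq_self_of_coe_eq_one_or_neg_one hε₂)
    (Circle.inv_eq_self_of_coe_eq_one_or_neg_one hε₃)
  have τ_mk (a b c d : ℤ) :
      τ (mk a b c d) = Circle.exp ((a : ℝ) * t₁ + (b : ℝ) * t₂) * ε₂ ^ c * ε₃ ^ d := by
    rw [lift_mk, Circle.exp_add, ← zsmul_eq_mul, ← zsmul_eq_mul, Circle.exp_zsmul,
      Circle.exp_zsmul]
  exact ⟨τ, τ_mk, lift_g₀ .., lift_g₁ .., lift_g₂ .., lift_g₃ .., fun τ' h₀ h₁ h₂ h₃ =>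
    hom_ext (h₀.trans (lift_g₀ ..).symm) (h₁.trans (lift_g₁ ..).symm)
      (h₂.trans (lift_g₂ ..).symm) (h₃.trans (lift_g₃ ..).symm)⟩
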